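/- Let d ≥ 1 and let F = ℂ⟨v₁,…,v_d⟩ be the free associative ℂ-algebra on d generators of degree 1, with F[n] the span of words of length n. Let [F,F] be the ℂ-linear span of all commutators ab − ba (a, b ∈ F), a graded subspace of F. Then for every n ≥ 1, dim_ℂ ( F[n] / (F[n] ∩ [F,F]) ) = (1/n) · Σ_{k | n} φ(k) · d^{n/k}, where φ is Euler's totient function and the sum is over positive divisors k of n; this is the number of cyclic words (necklaces) of length n in d letters. -/

import Mathlib

/-!
Sending a word of length `n` to its necklace (its class up to rotation) defines a linear map
`F → ℂ^{necklaces}` that kills `[F, F]`, because `uv` and `vu` are rotations of each other.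
Conversely, rotating `uv` to `vu` changes a word by the commutator `[u, v]`, so modulo `[F, F]`
every word of length `n` equals a fixed representative of its necklace. Hence
`F[n] / (F[n] ∩ [F, F])` has the necklaces of length `n` as a basis. These are the orbits of
`ZMod n` acting on `ZMod n → Fin d` by translation; translation by `a` fixes the
`d ^ gcd(n, a)` functions constant on the cosets of `⟨a⟩`, and `gcd(n, a) = n / k` for exactly
`φ(k)` residues `a`, so Burnside's lemma gives the count.
-/

noncomputable section

/-- The product in the free algebra of the generators listed by `l`. -/
def wordProd {N : ℕ} (l : List (Fin N)) : FreeAlgebra ℂ (Fin N) :=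
  (l.map (FreeAlgebra.ι ℂ)).prod

/-- The weight-`m` graded component of the free algebra on `Fin N`, where the generator `k`
has degree `d k`: the span of the products of generators whose degrees sum to `m`. -/
def wt {N : ℕ} (d : Fin N → ℕ) (m : ℕ) : Submodule ℂ (FreeAlgebra ℂ (Fin N)) :=
  Submodule.span ℂ {x | ∃ l : List (Fin N), (l.map d).sum = m ∧ x = wordProd l}

/-- The linear span of all commutators `a*b − b*a` in an algebra `A`. -/
def commSpan (A : Type*) [Ring A] [Algebra ℂ A] : Submodule ℂ A :=
  Submodule.span ℂ {x | ∃ a b : A, x = a * b - b * a}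

open Finset

theorem ZMod.index_zmultiples {n : ℕ} [NeZero n] (a : ZMod n) :
    (AddSubgroup.zmultiples a).index = n.gcd a.val := by
  have hn : 0 < n := NeZero.pos n
  have h := (AddSubgroup.zmultiples a).index_mul_card
  rw [Nat.card_zmultiples, Nat.card_zmod, ← ZMod.natCast_zmod_val a,
    ZMod.addOrderOf_coe _ hn.ne', ZMod.natCast_zmod_val] at h
  have hpos : 0 < n / n.gcd a.val :=
    Nat.div_pos (Nat.gcd_le_left _ hn) (Nat.gcd_pos_of_pos_left _ hn)
  refine Nat.eq_of_mul_eq_mul_right hpos ?_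
  rw [h, Nat.mul_div_cancel' (Nat.gcd_dvd_left _ _)]

theorem Nat.sum_pow_gcd_eq_sum_totient_mul_pow (n d : ℕ) (hn : n ≠ 0) :
    ∑ j ∈ range n, d ^ n.gcd j = ∑ k ∈ n.divisors, k.totient * d ^ (n / k) := by
  rw [← Nat.sum_div_divisors n, ← sum_fiberwise_of_maps_to (g := n.gcd)
      (fun j _ => Nat.mem_divisors.mpr ⟨Nat.gcd_dvd_left n j, hn⟩)]
  refine sum_congr rfl fun m hm => ?_
  have hmn := Nat.dvd_of_mem_divisors hm
  rw [sum_congr rfl fun j hj => by rw [(mem_filter.mp hj).2], sum_const,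
    ← Nat.totient_div_of_dvd hmn, smul_eq_mul, Nat.div_div_self hmn hn]

def Submodule.quotComapSubtypeEquivOfSection {R M V : Type*} [Ring R] [AddCommGroup M]
    [Module R M] [AddCommGroup V] [Module R V] (W C : Submodule R M) (T : M →ₗ[R] V)
    (S : V →ₗ[R] M) (hTS : T ∘ₗ S = LinearMap.id) (hS : LinearMap.range S ≤ W)
    (hC : C ≤ LinearMap.ker T) (hW : ∀ x ∈ W, x - S (T x) ∈ C) :
    (W ⧸ C.comap W.subtype) ≃ₗ[R] V :=
  have hsurj : Function.Surjective (T ∘ₗ W.subtype) :=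
    fun y => ⟨⟨S y, hS ⟨y, rfl⟩⟩, LinearMap.congr_fun hTS y⟩
  have hker : LinearMap.ker (T ∘ₗ W.subtype) = C.comap W.subtype := by
    ext x
    refine ⟨fun hx => ?_, fun hx => hC hx⟩
    simpa [show T x = 0 from hx] using hW x x.2
  (Submodule.quotEquivOfEq _ _ hker.symm).trans
    ((T ∘ₗ W.subtype).quotKerEquivOfSurjective hsurj)

section Translation

-- `(g +ᵥ F) x = F (-g + x)`: translating `F` rotates the word `F 0, F 1, …, F (n - 1)`.
attribute [local instance] arrowAddAction

variable {α : Type*} {n : ℕ}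

def fixedByEquivFunQuotientZMultiples {G : Type*} [AddCommGroup G] (g : G) :
    AddAction.fixedBy (G → α) g ≃ (G ⧸ AddSubgroup.zmultiples g → α) where
  toFun F := Quotient.lift F.1 fun x y hxy => by
    have hmem : -x + y ∈ AddSubgroup.zmultiples g := QuotientAddGroup.leftRel_apply.mp hxy
    have h : F.1 (-(-x + y) + y) = F.1 y := congrFun (vadd_eq_self_of_mem_zmultiples hmem F.2) y
    rwa [neg_add_rev, neg_neg, add_assoc, add_comm x y, neg_add_cancel_left] at h
  invFun f := ⟨f ∘ QuotientAddGroup.mk, funext fun x =>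
    congrArg f (QuotientAddGroup.eq.mpr (by simp))⟩
  left_inv F := rfl
  right_inv f := funext fun q => Quotient.inductionOn q fun _ => rfl

theorem card_fixedBy_zmod_fun [NeZero n] (a : ZMod n) :
    Nat.card (AddAction.fixedBy (ZMod n → α) a) = Nat.card α ^ n.gcd a.val := by
  rw [Nat.card_congr (fixedByEquivFunQuotientZMultiples a), Nat.card_fun, ← AddSubgroup.index,
    ZMod.index_zmultiples]

def listOfZMod (F : ZMod n → α) : List α := List.ofFn fun i : Fin n => F i

theorem length_listOfZMod (F : ZMod n → α) : (listOfZMod F).length = n := List.length_ofFn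

theorem getElem_listOfZMod (F : ZMod n → α) (i : ℕ) (hi : i < (listOfZMod F).length) :
    (listOfZMod F)[i] = F i := List.getElem_ofFn ..

variable [NeZero n]

theorem listOfZMod_injective : Function.Injective (listOfZMod : (ZMod n → α) → List α) :=
  fun F G h => funext fun x => by
    simpa [ZMod.natCast_zmod_val] using congrFun (List.ofFn_injective h) ⟨x.val, x.val_lt⟩

theorem listOfZMod_vadd (g : ZMod n) (F : ZMod n → α) :
    listOfZMod (g +ᵥ F) = (listOfZMod F).rotate (-g).val := by
  refine List.ext_getElem (by simp [length_listOfZMod]) fun i _ _ => ?_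
  rw [List.getElem_rotate, getElem_listOfZMod, getElem_listOfZMod, length_listOfZMod,
    ZMod.natCast_mod, Nat.cast_add, ZMod.natCast_zmod_val, add_comm]
  rfl

theorem exists_listOfZMod_eq {l : List α} (hl : l.length = n) :
    ∃ F : ZMod n → α, listOfZMod F = l :=
  ⟨fun x => l[x.val]'(hl ▸ x.val_lt), List.ext_getElem (by rw [length_listOfZMod, hl])
    fun i _ hi => by
      rw [getElem_listOfZMod]
      simp only [ZMod.val_natCast, Nat.mod_eq_of_lt (hl ▸ hi)]⟩

end Translation

def Necklace (α : Type*) (n : ℕ) : Type _ := {c : Cycle α // c.length = n}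

namespace Necklace

section

variable {α : Type*} {n : ℕ}

def mk (l : List α) (h : l.length = n) : Necklace α n := ⟨l, by rwa [Cycle.length_coe]⟩

theorem mk_eq_mk_iff {l₁ l₂ : List α} (h₁ : l₁.length = n) (h₂ : l₂.length = n) :
    mk l₁ h₁ = mk l₂ h₂ ↔ l₁ ~r l₂ :=
  Subtype.ext_iff.trans Cycle.coe_eq_coe

def rep (q : Necklace α n) : List α := Quotient.out q.1

theorem length_rep (q : Necklace α n) : q.rep.length = n := by
  rw [← Cycle.length_coe]
  exact (congrArg Cycle.length (Quotient.out_eq q.1)).trans q.2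

theorem mk_rep (q : Necklace α n) : mk q.rep q.length_rep = q :=
  Subtype.ext (Quotient.out_eq q.1)

theorem exists_mk_eq (q : Necklace α n) : ∃ l h, mk l h = q := ⟨_, _, q.mk_rep⟩

instance [Finite α] : Finite (Necklace α n) :=
  Finite.of_surjective (fun f : Fin n → α => mk (List.ofFn f) (List.length_ofFn))
    fun q => by
      obtain ⟨l, rfl, rfl⟩ := q.exists_mk_eq
      exact ⟨fun i => l[i], by simp⟩

def ofZMod (F : ZMod n → α) : Necklace α n := mk (listOfZMod F) (length_listOfZMod F)

attribute [local instance] arrowAddAction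

variable [NeZero n]

theorem ofZMod_surjective : Function.Surjective (ofZMod : (ZMod n → α) → Necklace α n) := by
  intro q
  obtain ⟨l, hl, rfl⟩ := q.exists_mk_eq
  obtain ⟨F, rfl⟩ := exists_listOfZMod_eq hl
  exact ⟨F, rfl⟩

theorem ofZMod_eq_ofZMod_iff {F G : ZMod n → α} :
    ofZMod F = ofZMod G ↔ AddAction.orbitRel (ZMod n) (ZMod n → α) F G := by
  rw [ofZMod, ofZMod, mk_eq_mk_iff, List.isRotated_comm, AddAction.orbitRel_apply,
    AddAction.mem_orbit_iff]
  constructor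
  · rintro ⟨k, hk⟩
    refine ⟨-(k : ZMod n), listOfZMod_injective ?_⟩
    rw [listOfZMod_vadd, neg_neg, ZMod.val_natCast, ← hk]
    simpa only [length_listOfZMod] using List.rotate_mod (listOfZMod G) k
  · rintro ⟨g, rfl⟩
    exact ⟨(-g).val, (listOfZMod_vadd g G).symm⟩

def orbitRelQuotientEquiv :
    AddAction.orbitRel.Quotient (ZMod n) (ZMod n → α) ≃ Necklace α n :=
  (Quotient.congr (Equiv.refl _) fun _ _ => Setoid.ker_def.trans ofZMod_eq_ofZMod_iff).symm.trans
    (Setoid.quotientKerEquivOfSurjective _ ofZMod_surjective)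

end

attribute [local instance] arrowAddAction in
theorem card_mul (α : Type*) [Finite α] (n : ℕ) :
    Nat.card (Necklace α n) * n = ∑ k ∈ n.divisors, k.totient * Nat.card α ^ (n / k) := by
  obtain rfl | hn := eq_or_ne n 0
  · simp
  have : NeZero n := ⟨hn⟩
  have := Fintype.ofFinite α
  have := Fintype.ofFinite (AddAction.orbitRel.Quotient (ZMod n) (ZMod n → α))
  have (g : ZMod n) : Fintype (AddAction.fixedBy (ZMod n → α) g) := Fintype.ofFinite _
  have burnside :=
    AddAction.sum_card_fixedBy_eq_card_orbits_mul_card_addGroup (ZMod n) (ZMod n → α)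
  simp only [← Nat.card_eq_fintype_card, card_fixedBy_zmod_fun, Nat.card_zmod] at burnside
  rw [← Nat.card_congr orbitRelQuotientEquiv, ← burnside,
    ← Nat.sum_pow_gcd_eq_sum_totient_mul_pow _ _ hn]
  obtain ⟨k, rfl⟩ := Nat.exists_eq_succ_of_ne_zero hn
  exact Fin.sum_univ_eq_sum_range (fun j => Nat.card α ^ (k + 1).gcd j) (k + 1)

end Necklace

theorem wordProd_append {N : ℕ} (l₁ l₂ : List (Fin N)) :
    wordProd (l₁ ++ l₂) = wordProd l₁ * wordProd l₂ := by
  simp [wordProd]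

theorem basisFreeMonoid_eq_wordProd {N : ℕ} (m : FreeMonoid (Fin N)) :
    FreeAlgebra.basisFreeMonoid ℂ (Fin N) m = wordProd m.toList := by
  simp [FreeAlgebra.basisFreeMonoid, FreeAlgebra.equivMonoidAlgebraFreeMonoid, wordProd,
    FreeMonoid.lift_apply]

theorem wt_one_eq_span (d n : ℕ) :
    wt (fun _ : Fin d => 1) n =
      Submodule.span ℂ {x | ∃ l : List (Fin d), l.length = n ∧ x = wordProd l} := by
  simp [wt]

theorem wordProd_sub_wordProd_mem_commSpan {N : ℕ} {l₁ l₂ : List (Fin N)} (h : l₁ ~r l₂) :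
    wordProd l₁ - wordProd l₂ ∈ commSpan (FreeAlgebra ℂ (Fin N)) := by
  obtain ⟨k, rfl⟩ := h
  rw [List.rotate_eq_drop_append_take_mod]
  nth_rewrite 1 [← List.take_append_drop (k % l₁.length) l₁]
  rw [wordProd_append, wordProd_append]
  exact Submodule.subset_span ⟨_, _, rfl⟩

section NecklaceCoeff

variable (N n : ℕ)

def necklaceCoeff : FreeAlgebra ℂ (Fin N) →ₗ[ℂ] (Necklace (Fin N) n →₀ ℂ) :=
  (FreeAlgebra.basisFreeMonoid ℂ (Fin N)).constr ℂ fun m =>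
    if h : m.toList.length = n then Finsupp.single (Necklace.mk m.toList h) 1 else 0

def necklaceSection : (Necklace (Fin N) n →₀ ℂ) →ₗ[ℂ] FreeAlgebra ℂ (Fin N) :=
  Finsupp.linearCombination ℂ fun q => wordProd q.rep

variable {N n}

theorem necklaceCoeff_wordProd (l : List (Fin N)) :
    necklaceCoeff N n (wordProd l) =
      if h : l.length = n then Finsupp.single (Necklace.mk l h) 1 else 0 := by
  rw [← FreeMonoid.toList_ofList l, ← basisFreeMonoid_eq_wordProd, necklaceCoeff,
    Module.Basis.constr_basis]

theorem necklaceCoeff_wordProd_append_comm (u v : List (Fin N)) :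
    necklaceCoeff N n (wordProd (u ++ v)) = necklaceCoeff N n (wordProd (v ++ u)) := by
  have hlen : (u ++ v).length = (v ++ u).length := by simp [add_comm]
  rw [necklaceCoeff_wordProd, necklaceCoeff_wordProd]
  by_cases h : (u ++ v).length = n
  · rw [dif_pos h, dif_pos (hlen ▸ h), (Necklace.mk_eq_mk_iff _ _).mpr List.isRotated_append]
  · rw [dif_neg h, dif_neg (hlen ▸ h)]

theorem necklaceCoeff_mul_comm (a b : FreeAlgebra ℂ (Fin N)) :
    necklaceCoeff N n (a * b) = necklaceCoeff N n (b * a) := by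
  let B := FreeAlgebra.basisFreeMonoid ℂ (Fin N)
  have h : (LinearMap.mul ℂ _).compr₂ (necklaceCoeff N n) =
      (LinearMap.mul ℂ _).flip.compr₂ (necklaceCoeff N n) :=
    B.ext fun u => B.ext fun v => by
      simpa [B, basisFreeMonoid_eq_wordProd, ← wordProd_append] using
        necklaceCoeff_wordProd_append_comm u.toList v.toList
  exact LinearMap.congr_fun₂ h a b

theorem commSpan_le_ker_necklaceCoeff :
    commSpan (FreeAlgebra ℂ (Fin N)) ≤ LinearMap.ker (necklaceCoeff N n) := by
  rw [commSpan, Submodule.span_le]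
  rintro x ⟨a, b, rfl⟩
  simp [necklaceCoeff_mul_comm a b]

theorem necklaceCoeff_comp_necklaceSection :
    necklaceCoeff N n ∘ₗ necklaceSection N n = LinearMap.id := by
  ext q
  simp [necklaceSection, necklaceCoeff_wordProd, q.length_rep, Necklace.mk_rep]

theorem range_necklaceSection_le_wt :
    LinearMap.range (necklaceSection N n) ≤ wt (fun _ : Fin N => 1) n := by
  rw [necklaceSection, Finsupp.range_linearCombination, wt_one_eq_span]
  exact Submodule.span_mono (Set.range_subset_iff.mpr fun q => ⟨q.rep, q.length_rep, rfl⟩)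

theorem sub_necklaceSection_necklaceCoeff_mem_commSpan {x : FreeAlgebra ℂ (Fin N)}
    (hx : x ∈ wt (fun _ : Fin N => 1) n) :
    x - necklaceSection N n (necklaceCoeff N n x) ∈ commSpan (FreeAlgebra ℂ (Fin N)) := by
  rw [wt_one_eq_span] at hx
  induction hx using Submodule.span_induction with
  | mem x hx =>
    obtain ⟨l, hl, rfl⟩ := hx
    rw [necklaceCoeff_wordProd, dif_pos hl, necklaceSection, Finsupp.linearCombination_single,
      one_smul]
    exact wordProd_sub_wordProd_mem_commSpan
      ((Necklace.mk_eq_mk_iff hl (Necklace.length_rep _)).mp (Necklace.mk_rep _).symm)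
  | zero => simp
  | add x y _ _ hx hy => simpa [add_sub_add_comm] using add_mem hx hy
  | smul c x _ hx => simpa [smul_sub] using Submodule.smul_mem _ c hx

end NecklaceCoeff

theorem finrank_wt_quotient_commSpan (d n : ℕ) :
    Module.finrank ℂ ((wt (fun _ : Fin d => 1) n) ⧸
        ((commSpan (FreeAlgebra ℂ (Fin d))).comap (wt (fun _ : Fin d => 1) n).subtype)) =
      Nat.card (Necklace (Fin d) n) := by
  have := Fintype.ofFinite (Necklace (Fin d) n)
  rw [(Submodule.quotComapSubtypeEquivOfSection _ _ _ _ necklaceCoeff_comp_necklaceSection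
    range_necklaceSection_le_wt commSpan_le_ker_necklaceCoeff
    fun _ => sub_necklaceSection_necklaceCoeff_mem_commSpan).finrank_eq,
    Module.finrank_finsupp_self, Nat.card_eq_fintype_card]

theorem stmt_17_general (d : ℕ) (n : ℕ) :
    (Module.finrank ℂ
        ((wt (fun _ : Fin d => 1) n) ⧸
          ((commSpan (FreeAlgebra ℂ (Fin d))).comap (wt (fun _ : Fin d => 1) n).subtype)))
        * n
      = ∑ k ∈ n.divisors, Nat.totient k * d ^ (n / k) := by
  rw [finrank_wt_quotient_commSpan, Necklace.card_mul, Nat.card_eq_fintype_card, Fintype.card_fin]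

/-- STATEMENT 17: for the free algebra `F = ℂ⟨v₁,…,v_d⟩` with generators of degree 1,
`dim (F[n]/(F[n] ∩ [F,F])) · n = Σ_{k ∣ n} φ(k) · d^{n/k}`, the number of necklaces of
length `n` in `d` letters (times `n`). -/
theorem stmt_17 (d : ℕ) (hd : 1 ≤ d) (n : ℕ) (hn : 1 ≤ n) :
    (Module.finrank ℂ
        ((wt (fun _ : Fin d => 1) n) ⧸
          ((commSpan (FreeAlgebra ℂ (Fin d))).comap (wt (fun _ : Fin d => 1) n).subtype)))
        * n
      = ∑ k ∈ n.divisors, Nat.totient k * d ^ (n / k) :=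
  stmt_17_general d n

end
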